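/- Let E : ℕ → ℝ be a nondecreasing sequence with Eₙ ≥ 0 for all n and Eₙ → +∞, and for t ∈ ℝ let U_t denote the time-evolution map on ℓ²(ℕ, ℂ) given by (U_t c)ₙ = exp(-i·Eₙ·t)·cₙ. Let M > 0 and let X ⊆ ℓ²(ℕ, ℂ) be any set of states such that every c ∈ X has ‖c‖ = 1 and energy expectation ∑ₙ |cₙ|²·Eₙ < M. Then for every t > 0 and every δ > 0 there exists a single s ≥ 0 such that ‖U_{-t} c - U_s c‖ < δ for all c ∈ X simultaneously. -/

import Mathlib

open scoped ENNReal

/-- The time-evolution map `U_t` on `ℓ²(ℕ, ℂ)`: `(U_t c)ₙ = exp(-i·Eₙ·t)·cₙ`. -/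
noncomputable def timeEvol (E : ℕ → ℝ) (t : ℝ) (c : lp (fun _ : ℕ => ℂ) 2) :
    lp (fun _ : ℕ => ℂ) 2 :=
  ⟨fun n => Complex.exp ((-(E n * t) : ℝ) * Complex.I) * (c : ∀ _ : ℕ, ℂ) n, by
    apply memℓp_gen
    have hs : Summable fun n : ℕ => ‖(c : ∀ _ : ℕ, ℂ) n‖ ^ (2 : ℝ≥0∞).toReal :=
      (lp.memℓp c).summable (by norm_num)
    refine hs.congr fun n => ?_
    simp [norm_mul, Complex.norm_exp]⟩

/-!
Levels with `Eₙ ≥ K` carry at most `M / K` of the mass of any `c ∈ X`, uniformly on `X`, and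
`‖1 - e^{-iEₙτ}‖ ≤ 2` there. The finitely many phases `e^{-iEₙt}` of the lower levels recur
simultaneously in the compact torus, giving `τ ≥ t` with `e^{-iEₙτ} ≈ 1` for those levels; then
`s = τ - t` works, since `U_{-t} - U_{τ-t} = U_{-t} (1 - U_τ)` and `U_{-t}` is unitary.
-/

open Filter Topology

/-- Two powers `gᵏ, gᵏ'` near a cluster point of `(gᵏ)ₖ` give `gᵏ' / gᵏ` near `1`. -/
theorem exists_pos_pow_mem_of_mem_nhds_one {G : Type*} [Group G] [TopologicalSpace G]
    [IsTopologicalGroup G] [CompactSpace G] (g : G) {U : Set G} (hU : U ∈ 𝓝 (1 : G)) :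
    ∃ n : ℕ, 0 < n ∧ g ^ n ∈ U := by
  obtain ⟨V, hV, hVU⟩ := exists_nhds_split_inv hU
  obtain ⟨a, ha⟩ := exists_clusterPt_of_compactSpace (map (g ^ ·) atTop)
  have hW : ∀ᶠ x in 𝓝 a, x * a⁻¹ ∈ V := by
    have : Tendsto (· * a⁻¹) (𝓝 a) (𝓝 1) := by
      simpa using (continuous_mul_const a⁻¹).tendsto a
    exact this hV
  have hfreq : ∃ᶠ k in atTop, g ^ k * a⁻¹ ∈ V := frequently_map.1 (ha.frequently hW)
  obtain ⟨k, hk⟩ := hfreq.exists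
  obtain ⟨k', hkk', hk'⟩ := frequently_atTop.1 hfreq (k + 1)
  refine ⟨k' - k, by omega, ?_⟩
  simpa [mul_div_mul_right_eq_div, div_eq_mul_inv, ← pow_sub g (by omega : k ≤ k')]
    using hVU _ hk' _ hk

theorem exists_ge_forall_norm_one_sub_exp_lt (E : ℕ → ℝ) (N : ℕ) {t ε : ℝ} (ht : 0 < t)
    (hε : 0 < ε) :
    ∃ τ, t ≤ τ ∧ ∀ n < N, ‖1 - Complex.exp (↑(-(E n * τ)) * Complex.I)‖ < ε := by
  let U : Set (ℕ → Circle) := {z | ∀ n < N, ‖1 - (z n : ℂ)‖ < ε}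
  have hU : U ∈ 𝓝 1 := by
    refine (Set.finite_lt_nat N).eventually_all.2 fun n _ => ?_
    have hcont : Continuous fun z : ℕ → Circle => ‖1 - (z n : ℂ)‖ := by fun_prop
    exact hcont.continuousAt.eventually_lt continuousAt_const (by simpa using hε)
  obtain ⟨k, hk, hkU⟩ :=
    exists_pos_pow_mem_of_mem_nhds_one (fun n => Circle.exp (-(E n * t))) hU
  refine ⟨k * t, le_mul_of_one_le_left ht.le (by exact_mod_cast hk), fun n hn => ?_⟩
  have hphase : Complex.exp (↑(-(E n * (k * t))) * Complex.I)
      = ((fun n => Circle.exp (-(E n * t))) ^ k) n := by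
    rw [Pi.pow_apply, ← Circle.exp_natCast_mul, Circle.coe_exp]
    congr 2
    push_cast
    ring
  rw [hphase]
  exact hkU n hn

lemma lp.norm_sq_eq_tsum {ι : Type*} {F : ι → Type*} [∀ i, NormedAddCommGroup (F i)]
    (f : lp F 2) : ‖f‖ ^ 2 = ∑' i, ‖f i‖ ^ 2 := by
  have h := lp.norm_rpow_eq_tsum (p := 2) (by norm_num) f
  norm_num at h
  exact_mod_cast h

lemma lp.summable_norm_sq {ι : Type*} {F : ι → Type*} [∀ i, NormedAddCommGroup (F i)]
    (f : lp F 2) : Summable fun i => ‖f i‖ ^ 2 := by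
  simpa using (lp.memℓp f).summable (by norm_num : 0 < (2 : ℝ≥0∞).toReal)

lemma lp.norm_sq_le_tsum {ι : Type*} {F : ι → Type*} [∀ i, NormedAddCommGroup (F i)]
    (f : lp F 2) {w : ι → ℝ} (hfw : ∀ i, ‖f i‖ ^ 2 ≤ w i) (hw : Summable w) :
    ‖f‖ ^ 2 ≤ ∑' i, w i := by
  rw [lp.norm_sq_eq_tsum]
  exact (lp.summable_norm_sq f).tsum_le_tsum hfw hw

lemma norm_one_sub_exp_ofReal_mul_I_le_two (x : ℝ) :
    ‖1 - Complex.exp (x * Complex.I)‖ ≤ 2 := by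
  calc ‖1 - Complex.exp (x * Complex.I)‖ ≤ ‖(1 : ℂ)‖ + ‖Complex.exp (x * Complex.I)‖ :=
        norm_sub_le _ _
    _ = 2 := by rw [norm_one, Complex.norm_exp_ofReal_mul_I]; norm_num

@[simp]
lemma timeEvol_apply (E : ℕ → ℝ) (t : ℝ) (c : lp (fun _ : ℕ => ℂ) 2) (n : ℕ) :
    timeEvol E t c n = Complex.exp (↑(-(E n * t)) * Complex.I) * c n :=
  rfl

lemma norm_timeEvol_sub_timeEvol_apply (E : ℕ → ℝ) (s τ : ℝ) (c : lp (fun _ : ℕ => ℂ) 2)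
    (n : ℕ) :
    ‖(timeEvol E s c - timeEvol E (τ + s) c) n‖
      = ‖1 - Complex.exp (↑(-(E n * τ)) * Complex.I)‖ * ‖c n‖ := by
  have hsplit : Complex.exp (↑(-(E n * (τ + s))) * Complex.I)
      = Complex.exp (↑(-(E n * s)) * Complex.I) * Complex.exp (↑(-(E n * τ)) * Complex.I) := by
    rw [← Complex.exp_add]
    push_cast
    ring_nf
  rw [lp.coeFn_sub, Pi.sub_apply, timeEvol_apply, timeEvol_apply, hsplit, mul_assoc,
    ← mul_sub, ← one_sub_mul, norm_mul, norm_mul, Complex.norm_exp_ofReal_mul_I, one_mul]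

/-- Below `N` the phase factor is at most `ε`; from `N` on it is at most `2 ≤ 2 √(Eₙ / K)`. -/
lemma norm_timeEvol_sub_timeEvol_sq_le {E : ℕ → ℝ} (hpos : ∀ n, 0 ≤ E n) {N : ℕ} {K ε τ : ℝ}
    (hK : 0 < K) (hEK : ∀ n, N ≤ n → K ≤ E n)
    (hτ : ∀ n < N, ‖1 - Complex.exp (↑(-(E n * τ)) * Complex.I)‖ ≤ ε)
    (c : lp (fun _ : ℕ => ℂ) 2) (hc : Summable fun n => ‖c n‖ ^ 2 * E n) (s : ℝ) :
    ‖timeEvol E s c - timeEvol E (τ + s) c‖ ^ 2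
      ≤ ε ^ 2 * ‖c‖ ^ 2 + 4 / K * ∑' n, ‖c n‖ ^ 2 * E n := by
  have hphase (n : ℕ) :
      ‖1 - Complex.exp (↑(-(E n * τ)) * Complex.I)‖ ^ 2 ≤ ε ^ 2 + 4 / K * E n := by
    rcases lt_or_ge n N with hn | hn
    · have hlow := pow_le_pow_left₀ (norm_nonneg _) (hτ n hn) 2
      have : 0 ≤ 4 / K * E n := mul_nonneg (by positivity) (hpos n)
      linarith
    · have hhigh := pow_le_pow_left₀ (norm_nonneg _)
        (norm_one_sub_exp_ofReal_mul_I_le_two (-(E n * τ))) 2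
      have : 4 ≤ 4 / K * E n := by
        rw [div_mul_eq_mul_div, le_div_iff₀ hK]
        linarith [hEK n hn]
      nlinarith [sq_nonneg ε]
  have hc2 := lp.summable_norm_sq c
  calc ‖timeEvol E s c - timeEvol E (τ + s) c‖ ^ 2
      ≤ ∑' n, (ε ^ 2 * ‖c n‖ ^ 2 + 4 / K * (‖c n‖ ^ 2 * E n)) := by
        refine lp.norm_sq_le_tsum _ (fun n => ?_) ((hc2.mul_left _).add (hc.mul_left _))
        rw [norm_timeEvol_sub_timeEvol_apply, mul_pow]
        nlinarith [hphase n, sq_nonneg ‖c n‖]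
    _ = ε ^ 2 * ‖c‖ ^ 2 + 4 / K * ∑' n, ‖c n‖ ^ 2 * E n := by
        rw [(hc2.mul_left _).tsum_add (hc.mul_left _), tsum_mul_left, tsum_mul_left,
          lp.norm_sq_eq_tsum]

theorem backward_approx_forward_energy_bound_general (E : ℕ → ℝ)
    (hpos : ∀ n, 0 ≤ E n) (hlim : Filter.Tendsto E Filter.atTop Filter.atTop)
    (M : ℝ) (hM : 0 < M) (X : Set (lp (fun _ : ℕ => ℂ) 2))
    (hXnorm : ∀ c ∈ X, ‖c‖ = 1)
    (hXsum : ∀ c ∈ X, Summable fun n : ℕ => ‖c n‖ ^ 2 * E n)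
    (hXE : ∀ c ∈ X, ∑' n : ℕ, ‖c n‖ ^ 2 * E n < M)
    (t δ : ℝ) (ht : 0 < t) (hδ : 0 < δ) :
    ∃ s : ℝ, 0 ≤ s ∧ ∀ c ∈ X, ‖timeEvol E (-t) c - timeEvol E s c‖ < δ := by
  set K := 8 * M / δ ^ 2
  obtain ⟨N, hN⟩ := (hlim.eventually_ge_atTop K).exists_forall_of_atTop
  obtain ⟨τ, htτ, hτ⟩ := exists_ge_forall_norm_one_sub_exp_lt E N ht (half_pos hδ)
  refine ⟨τ - t, sub_nonneg.2 htτ, fun c hc => ?_⟩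
  have hbound := norm_timeEvol_sub_timeEvol_sq_le hpos (by positivity : 0 < K) hN
    (fun n hn => (hτ n hn).le) c (hXsum c hc) (-t)
  rw [← sub_eq_add_neg, hXnorm c hc] at hbound
  have henergy : 4 / K * ∑' n, ‖c n‖ ^ 2 * E n < 4 / K * M :=
    mul_lt_mul_of_pos_left (hXE c hc) (by positivity)
  have hKM : 4 / K * M = δ ^ 2 / 2 := by
    simp only [K]
    field_simp
    ring
  refine lt_of_pow_lt_pow_left₀ 2 hδ.le ?_
  nlinarith

/-- backward evolution approximated by forward evolution, uniformly
over any set of states with uniformly bounded energy expectation values. -/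
theorem backward_approx_forward_energy_bound (E : ℕ → ℝ) (hmono : Monotone E)
    (hpos : ∀ n, 0 ≤ E n) (hlim : Filter.Tendsto E Filter.atTop Filter.atTop)
    (M : ℝ) (hM : 0 < M) (X : Set (lp (fun _ : ℕ => ℂ) 2))
    (hXnorm : ∀ c ∈ X, ‖c‖ = 1)
    (hXsum : ∀ c ∈ X, Summable fun n : ℕ => ‖c n‖ ^ 2 * E n)
    (hXE : ∀ c ∈ X, ∑' n : ℕ, ‖c n‖ ^ 2 * E n < M)
    (t δ : ℝ) (ht : 0 < t) (hδ : 0 < δ) :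
    ∃ s : ℝ, 0 ≤ s ∧ ∀ c ∈ X, ‖timeEvol E (-t) c - timeEvol E s c‖ < δ :=
  backward_approx_forward_energy_bound_general E hpos hlim M hM X hXnorm hXsum hXE t δ ht hδ
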